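/- arXiv:2107.02851 — 5 statements merged into one kernel-verified Lean document; each statement's English description precedes it below -/
import Mathlib

section
/- Let |μ| ≤ 1 and Φ(z) = μz. The composition operator C_Φ on H_E(ξ) is unitary if and only if |μ| = 1. In particular, C_Φ is an isometry if and only if it is unitary. -/
noncomputable section

open Filter

/-- `n`-th Taylor coefficient of `f` at `0`. -/
def heCoeff (f : ℂ → ℂ) (n : ℕ) : ℂ := iteratedDeriv n f 0 / (n.factorial : ℂ)

/-- Membership in the weighted Hardy space of entire functions `H_E(ξ)`. -/
def MemHE (ξ : ℕ → ℝ) (f : ℂ → ℂ) : Prop :=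
  Differentiable ℂ f ∧ Summable (fun n => ‖heCoeff f n‖ ^ 2 * (ξ n) ^ 2)

/-- Squared norm in `H_E(ξ)`. -/
def heNormSq (ξ : ℕ → ℝ) (f : ℂ → ℂ) : ℝ := ∑' n, ‖heCoeff f n‖ ^ 2 * (ξ n) ^ 2

/-- Inner product in `H_E(ξ)`. -/
def heInner (ξ : ℕ → ℝ) (f g : ℂ → ℂ) : ℂ :=
  ∑' n, heCoeff f n * (starRingEnd ℂ) (heCoeff g n) * ((ξ n : ℂ)) ^ 2

/-- `ξ` is an admissible weight sequence: positive with `ξ n ^ (1/n) → ∞`. -/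
def HEWeight (ξ : ℕ → ℝ) : Prop :=
  (∀ n, 0 < ξ n) ∧ Tendsto (fun n : ℕ => (ξ n) ^ ((1 : ℝ) / n)) atTop atTop

/-- An operator on functions is an isometry of `H_E(ξ)`. -/
def IsIsometryHE (ξ : ℕ → ℝ) (T : (ℂ → ℂ) → (ℂ → ℂ)) : Prop :=
  (∀ f, MemHE ξ f → MemHE ξ (T f)) ∧ ∀ f, MemHE ξ f → heNormSq ξ (T f) = heNormSq ξ f

/-- Unitary: an isometry of `H_E(ξ)` mapping `H_E(ξ)` onto itself. -/
def IsUnitaryHE (ξ : ℕ → ℝ) (T : (ℂ → ℂ) → (ℂ → ℂ)) : Prop :=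
  IsIsometryHE ξ T ∧ ∀ g, MemHE ξ g → ∃ f, MemHE ξ f ∧ T f = g

/-- Composition operator `C_Φ f = f ∘ Φ`. -/
def compOp (Φ : ℂ → ℂ) : (ℂ → ℂ) → (ℂ → ℂ) := fun f => f ∘ Φ

/-- Weighted composition operator `C_{Υ,Φ} f = Υ · (f ∘ Φ)`. -/
def wCompOp (Υ Φ : ℂ → ℂ) : (ℂ → ℂ) → (ℂ → ℂ) := fun f z => Υ z * f (Φ z)

/-- Reproducing kernel `K_p(z) = ∑ conj(p)^n z^n / ξ_n²`. -/
def heKernel (ξ : ℕ → ℝ) (p : ℂ) : ℂ → ℂ :=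
  fun z => ∑' n, (starRingEnd ℂ p) ^ n * z ^ n / ((ξ n : ℂ)) ^ 2

/-- Boundedness of an operator on `H_E(ξ)`. -/
def IsBoundedHE (ξ : ℕ → ℝ) (T : (ℂ → ℂ) → (ℂ → ℂ)) : Prop :=
  ∃ M > (0 : ℝ), ∀ f, MemHE ξ f → MemHE ξ (T f) ∧
    Real.sqrt (heNormSq ξ (T f)) ≤ M * Real.sqrt (heNormSq ξ f)

/-- Generalized weighted composition operator `D^p_{Φ,Υ} f = Υ · (f^{(p)} ∘ Φ)`. -/
def genWComp (p : ℕ) (Φ Υ : ℂ → ℂ) : (ℂ → ℂ) → (ℂ → ℂ) :=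
  fun f z => Υ z * iteratedDeriv p f (Φ z)

lemma heCoeff_comp_mul (μ : ℂ) {f : ℂ → ℂ} (hf : Differentiable ℂ f) (n : ℕ) :
    heCoeff (fun z => f (μ * z)) n = μ ^ n * heCoeff f n := by
  unfold heCoeff
  rw [iteratedDeriv_comp_const_mul (hf.contDiff) μ]
  simp [mul_div_assoc]

lemma iteratedDeriv_zero_fun (k : ℕ) (x : ℂ) :
    iteratedDeriv k (fun _ : ℂ => (0:ℂ)) x = 0 := by
  induction k generalizing x with
  | zero => simp
  | succ k ih => rw [iteratedDeriv_succ', deriv_const']; exact ih x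

lemma deriv_linear (c : ℂ) : deriv (fun z : ℂ => c * z) = fun _ => c := by
  funext z
  simpa using ((hasDerivAt_id z).const_mul c).deriv

lemma heCoeff_linear (c : ℂ) (n : ℕ) :
    heCoeff (fun z => c * z) n = if n = 1 then c else 0 := by
  unfold heCoeff
  match n with
  | 0 => simp
  | 1 => simp [iteratedDeriv_one, deriv_linear]
  | (k+2) =>
    rw [iteratedDeriv_succ', deriv_linear, iteratedDeriv_succ', deriv_const',
      iteratedDeriv_zero_fun]
    simp

lemma memHE_linear (ξ : ℕ → ℝ) (c : ℂ) : MemHE ξ (fun z => c * z) := by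
  constructor
  · exact (differentiable_const c).mul differentiable_id
  · apply summable_of_finite_support
    apply Set.Finite.subset (Set.finite_singleton 1)
    intro n hn
    simp only [Function.mem_support] at hn
    by_contra h
    simp only [Set.mem_singleton_iff] at h
    exact hn (by rw [heCoeff_linear]; simp [h])

lemma heNormSq_linear (ξ : ℕ → ℝ) (c : ℂ) :
    heNormSq ξ (fun z => c * z) = ‖c‖ ^ 2 * (ξ 1) ^ 2 := by
  unfold heNormSq
  rw [tsum_eq_single 1]
  · rw [heCoeff_linear]; simp
  · intro n hn; rw [heCoeff_linear]; simp [hn]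

/-- `C_Φ`, `Φ(z) = μz`, `|μ| ≤ 1`, is unitary on `H_E(ξ)` iff `|μ| = 1`;
in particular it is an isometry iff it is unitary. -/
theorem stmt4 (ξ : ℕ → ℝ) (hξ : HEWeight ξ) (μ : ℂ) (hμ : ‖μ‖ ≤ 1)
    (Φ : ℂ → ℂ) (hΦ : Φ = fun z => μ * z) :
    (IsUnitaryHE ξ (compOp Φ) ↔ ‖μ‖ = 1) ∧
    (IsIsometryHE ξ (compOp Φ) ↔ IsUnitaryHE ξ (compOp Φ)) := by
  subst hΦ
  have hcomp : ∀ f : ℂ → ℂ, compOp (fun z => μ * z) f = fun z => f (μ * z) := fun f => rfl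
  -- key: coefficients of C_Φ f
  have hco : ∀ (f : ℂ → ℂ), Differentiable ℂ f → ∀ n,
      heCoeff (compOp (fun z => μ * z) f) n = μ ^ n * heCoeff f n := by
    intro f hf n
    rw [hcomp]; exact heCoeff_comp_mul μ hf n
  -- isometry when ‖μ‖ = 1
  have hIso : ‖μ‖ = 1 → IsIsometryHE ξ (compOp (fun z => μ * z)) := by
    intro h1
    have key : ∀ f, MemHE ξ f → ∀ n,
        ‖heCoeff (compOp (fun z => μ * z) f) n‖ ^ 2 * (ξ n) ^ 2
          = ‖heCoeff f n‖ ^ 2 * (ξ n) ^ 2 := by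
      intro f hf n
      rw [hco f hf.1 n, norm_mul, norm_pow, h1, one_pow, one_mul]
    constructor
    · intro f hf
      refine ⟨hf.1.comp ((differentiable_const μ).mul differentiable_id), ?_⟩
      exact hf.2.congr (fun n => (key f hf n).symm)
    · intro f hf
      unfold heNormSq
      exact tsum_congr (key f hf)
  have hSurj : ‖μ‖ = 1 → ∀ g, MemHE ξ g → ∃ f, MemHE ξ f ∧ compOp (fun z => μ * z) f = g := by
    intro h1 g hg
    have hμ0 : μ ≠ 0 := by
      intro h; rw [h, norm_zero] at h1; exact zero_ne_one h1
    refine ⟨fun z => g (μ⁻¹ * z), ?_, ?_⟩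
    · constructor
      · exact hg.1.comp ((differentiable_const μ⁻¹).mul differentiable_id)
      · have : ∀ n, ‖heCoeff (fun z => g (μ⁻¹ * z)) n‖ ^ 2 * (ξ n) ^ 2
            = ‖heCoeff g n‖ ^ 2 * (ξ n) ^ 2 := by
          intro n
          rw [heCoeff_comp_mul μ⁻¹ hg.1 n, norm_mul, norm_pow, norm_inv, h1]
          norm_num
        exact hg.2.congr (fun n => (this n).symm)
    · funext z
      simp [compOp, Function.comp, inv_mul_cancel_left₀ hμ0]
  have hNec : IsIsometryHE ξ (compOp (fun z => μ * z)) → ‖μ‖ = 1 := by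
    intro hI
    have h := hI.2 _ (memHE_linear ξ 1)
    have hT : compOp (fun z => μ * z) (fun z => (1:ℂ) * z) = fun z => μ * z := by
      funext z; simp [compOp, Function.comp]
    rw [hT] at h
    have h2 : heNormSq ξ (fun z => μ * z) = heNormSq ξ (fun z => (1:ℂ) * z) := h
    rw [heNormSq_linear, heNormSq_linear] at h2
    have hξ1 : (ξ 1) ^ 2 ≠ 0 := pow_ne_zero _ (hξ.1 1).ne'
    have h3 : ‖μ‖ ^ 2 = ‖(1:ℂ)‖ ^ 2 := mul_right_cancel₀ hξ1 h2
    rw [norm_one, one_pow] at h3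
    nlinarith [norm_nonneg μ]
  constructor
  · constructor
    · intro hU; exact hNec hU.1
    · intro h1; exact ⟨hIso h1, hSurj h1⟩
  · constructor
    · intro hI; have h1 := hNec hI; exact ⟨hI, hSurj h1⟩
    · intro hU; exact hU.1
end
end

section
/- Let Φ₁(z) = μ₁z and Φ₂(z) = μ₂z with |μ₁| ≤ 1 and |μ₂| ≤ 1. The product C_{Φ₁} C_{Φ₂} of the composition operators on H_E(ξ) is an isometry if and only if |μ₁| = 1 and |μ₂| = 1; the same equivalence holds with 'isometry' replaced by 'unitary'. -/
noncomputable section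

open Filter

lemma heCoeff_dilate (f : ℂ → ℂ) (hf : Differentiable ℂ f) (ν : ℂ) (n : ℕ) :
    heCoeff (fun z => f (ν * z)) n = ν ^ n * heCoeff f n := by
  unfold heCoeff
  have h := congrFun (iteratedDeriv_comp_const_mul (f := f) (n := n) hf.contDiff ν) 0
  rw [h]
  simp [mul_div_assoc]

lemma iterDeriv_zero_fun (n : ℕ) : iteratedDeriv n (fun _ : ℂ => (0:ℂ)) = fun _ => 0 := by
  induction n with
  | zero => simp
  | succ m ih =>
    rw [iteratedDeriv_succ', show deriv (fun _ : ℂ => (0:ℂ)) = fun _ => (0:ℂ) by funext z; simp]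
    exact ih

lemma heCoeff_id (n : ℕ) : heCoeff (fun z : ℂ => z) n = if n = 1 then 1 else 0 := by
  unfold heCoeff
  match n with
  | 0 => simp
  | 1 => simp [iteratedDeriv_succ]
  | (n+2) =>
    have h1 : deriv (fun z : ℂ => z) = fun _ => (1 : ℂ) := by
      funext z; simp
    have h2 : iteratedDeriv (n+2) (fun z : ℂ => z) = iteratedDeriv (n+1) (deriv fun z : ℂ => z) :=
      iteratedDeriv_succ'
    rw [h2, h1]
    have : iteratedDeriv (n+1) (fun _ : ℂ => (1:ℂ)) = fun _ => 0 := by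
      rw [iteratedDeriv_succ']
      have : deriv (fun _ : ℂ => (1:ℂ)) = fun _ => (0:ℂ) := by funext z; simp
      rw [this, iterDeriv_zero_fun]
    simp [this]

lemma memHE_id (ξ : ℕ → ℝ) : MemHE ξ (fun z : ℂ => z) := by
  refine ⟨differentiable_id, ?_⟩
  apply summable_of_ne_finset_zero (s := {1})
  intro n hn
  simp only [Finset.mem_singleton] at hn
  simp [heCoeff_id, hn]

lemma dilate_memHE (ξ : ℕ → ℝ) (ν : ℂ) (hν : ‖ν‖ = 1) (f : ℂ → ℂ) (hf : MemHE ξ f) :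
    MemHE ξ (fun z => f (ν * z)) := by
  refine ⟨hf.1.comp ((differentiable_id.const_mul ν)), ?_⟩
  have : (fun n => ‖heCoeff (fun z => f (ν * z)) n‖ ^ 2 * (ξ n) ^ 2)
      = fun n => ‖heCoeff f n‖ ^ 2 * (ξ n) ^ 2 := by
    funext n
    rw [heCoeff_dilate f hf.1 ν n, norm_mul, norm_pow, hν, one_pow, one_mul]
  rw [this]
  exact hf.2

lemma dilate_normSq (ξ : ℕ → ℝ) (ν : ℂ) (hν : ‖ν‖ = 1) (f : ℂ → ℂ) (hf : MemHE ξ f) :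
    heNormSq ξ (fun z => f (ν * z)) = heNormSq ξ f := by
  unfold heNormSq
  congr 1
  funext n
  rw [heCoeff_dilate f hf.1 ν n, norm_mul, norm_pow, hν, one_pow, one_mul]

/-- `C_{Φ₁} C_{Φ₂}`, `Φᵢ(z) = μᵢ z`, `|μᵢ| ≤ 1`, is an isometry (resp. unitary)
on `H_E(ξ)` iff `|μ₁| = 1` and `|μ₂| = 1`. -/
theorem stmt5 (ξ : ℕ → ℝ) (hξ : HEWeight ξ) (μ₁ μ₂ : ℂ)
    (hμ₁ : ‖μ₁‖ ≤ 1) (hμ₂ : ‖μ₂‖ ≤ 1)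
    (Φ₁ Φ₂ : ℂ → ℂ) (hΦ₁ : Φ₁ = fun z => μ₁ * z) (hΦ₂ : Φ₂ = fun z => μ₂ * z) :
    (IsIsometryHE ξ (fun f => compOp Φ₁ (compOp Φ₂ f)) ↔ (‖μ₁‖ = 1 ∧ ‖μ₂‖ = 1)) ∧
    (IsUnitaryHE ξ (fun f => compOp Φ₁ (compOp Φ₂ f)) ↔ (‖μ₁‖ = 1 ∧ ‖μ₂‖ = 1)) := by
  subst hΦ₁ hΦ₂
  set ν : ℂ := μ₂ * μ₁ with hν
  have hT : (fun f => compOp (fun z => μ₁ * z) (compOp (fun z => μ₂ * z) f))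
      = fun f => (fun z => f (ν * z)) := by
    funext f z
    simp [compOp, Function.comp, hν, mul_assoc]
  rw [hT]
  have hξ1 : 0 < ξ 1 := hξ.1 1
  -- isometry implies norm condition
  have key : IsIsometryHE ξ (fun f => fun z => f (ν * z)) → (‖μ₁‖ = 1 ∧ ‖μ₂‖ = 1) := by
    intro hiso
    have hid := hiso.2 (fun z : ℂ => z) (memHE_id ξ)
    have hTc : ∀ n, heCoeff (fun z : ℂ => ν * z) n = ν ^ n * (if n = 1 then 1 else 0) := by
      intro n
      have := heCoeff_dilate (fun z : ℂ => z) differentiable_id ν n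
      rw [this, heCoeff_id]
    have h1 : heNormSq ξ (fun z : ℂ => ν * z) = ‖ν‖ ^ 2 * (ξ 1) ^ 2 := by
      unfold heNormSq
      rw [tsum_eq_single 1]
      · rw [hTc 1]; simp [mul_pow]
      · intro n hn; rw [hTc n]; simp [hn]
    have h2 : heNormSq ξ (fun z : ℂ => z) = (ξ 1) ^ 2 := by
      unfold heNormSq
      rw [tsum_eq_single 1]
      · simp [heCoeff_id]
      · intro n hn; simp [heCoeff_id, hn]
    rw [h1, h2] at hid
    have hν1 : ‖ν‖ = 1 := by
      have h3 : ‖ν‖ ^ 2 = 1 := by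
        have hne : (ξ 1 : ℝ) ^ 2 ≠ 0 := by positivity
        have := mul_right_cancel₀ hne (show ‖ν‖ ^ 2 * ξ 1 ^ 2 = 1 * ξ 1 ^ 2 by linarith [hid])
        linarith
      nlinarith [norm_nonneg ν]
    have hprod : ‖μ₂‖ * ‖μ₁‖ = 1 := by rw [← norm_mul]; exact hν1
    have h1' : ‖μ₁‖ = 1 := by nlinarith [norm_nonneg μ₁, norm_nonneg μ₂]
    have h2' : ‖μ₂‖ = 1 := by nlinarith [norm_nonneg μ₁, norm_nonneg μ₂]
    exact ⟨h1', h2'⟩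
  have mkiso : (‖μ₁‖ = 1 ∧ ‖μ₂‖ = 1) → IsIsometryHE ξ (fun f => fun z => f (ν * z)) := by
    rintro ⟨h1, h2⟩
    have hνn : ‖ν‖ = 1 := by rw [hν, norm_mul, h1, h2, mul_one]
    exact ⟨fun f hf => dilate_memHE ξ ν hνn f hf, fun f hf => dilate_normSq ξ ν hνn f hf⟩
  constructor
  · exact ⟨key, mkiso⟩
  · constructor
    · intro h; exact key h.1
    · rintro ⟨h1, h2⟩
      have hνn : ‖ν‖ = 1 := by rw [hν, norm_mul, h1, h2, mul_one]
      have hν0 : ν ≠ 0 := by intro h; rw [h] at hνn; simp at hνn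
      refine ⟨mkiso ⟨h1, h2⟩, fun g hg => ?_⟩
      have hinv : ‖ν⁻¹‖ = 1 := by rw [norm_inv, hνn]; norm_num
      refine ⟨fun z => g (ν⁻¹ * z), dilate_memHE ξ ν⁻¹ hinv g hg, ?_⟩
      funext z
      simp only []
      rw [← mul_assoc, inv_mul_cancel₀ hν0, one_mul]
end
end

section
/- Let Φ(z) = az + b with |a| ≤ 1 and b ∈ ℂ, and suppose the composition operator C_Φ is bounded on H_E(ξ). Then C_Φ is an isometry on H_E(ξ) if and only if |a| = 1 and b = 0; moreover C_Φ is unitary if and only if |a| = 1 and b = 0. -/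
/-! The Taylor coefficients of `f (a z)` are `aⁿ` times those of `f`, so for `|a| = 1` the
composition with `z ↦ a z` preserves every weighted norm, and `z ↦ a⁻¹ z` inverts it.
Conversely, testing an isometric `C_Φ` on the polynomials `c + z` (where only the coefficients
of degree `0` and `1` enter the norm) forces first `b = 0` and then `|a| = 1`. -/

noncomputable section

open Filter

theorem heCoeff_comp_const_mul {f : ℂ → ℂ} (hf : Differentiable ℂ f) (a : ℂ) (n : ℕ) :
    heCoeff (fun z => f (a * z)) n = a ^ n * heCoeff f n := by
  simp only [heCoeff, iteratedDeriv_comp_const_mul hf.contDiff a, mul_zero, mul_div_assoc]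

theorem heCoeff_affine (c₀ c₁ : ℂ) (n : ℕ) :
    heCoeff (fun z => c₀ + c₁ * z) n = if n = 0 then c₀ else if n = 1 then c₁ else 0 := by
  rcases n with _ | n
  · simp [heCoeff]
  · rw [heCoeff, iteratedDeriv_const_add n.succ_pos, iteratedDeriv_const_mul_field,
      iteratedDeriv_fun_id_zero]
    rcases n with _ | n <;> simp

theorem heCoeff_affine_eq_zero (c₀ c₁ : ℂ) {n : ℕ} (hn : n ∉ ({0, 1} : Finset ℕ)) :
    heCoeff (fun z => c₀ + c₁ * z) n = 0 := by
  simp only [Finset.mem_insert, Finset.mem_singleton, not_or] at hn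
  rw [heCoeff_affine, if_neg hn.1, if_neg hn.2]

section WeightedNorm

variable (ξ : ℕ → ℝ)

theorem memHE_affine (c₀ c₁ : ℂ) : MemHE ξ (fun z => c₀ + c₁ * z) :=
  ⟨by fun_prop, summable_of_ne_finset_zero (s := {0, 1}) fun n hn => by
    simp [heCoeff_affine_eq_zero c₀ c₁ hn]⟩

theorem heNormSq_affine (c₀ c₁ : ℂ) :
    heNormSq ξ (fun z => c₀ + c₁ * z) = ‖c₀‖ ^ 2 * ξ 0 ^ 2 + ‖c₁‖ ^ 2 * ξ 1 ^ 2 := by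
  rw [heNormSq, tsum_eq_sum (s := {0, 1}) fun n hn => by simp [heCoeff_affine_eq_zero c₀ c₁ hn]]
  simp [heCoeff_affine]

variable {ξ}

theorem memHE_comp_const_mul {a : ℂ} (ha : ‖a‖ = 1) {f : ℂ → ℂ} (hf : MemHE ξ f) :
    MemHE ξ (fun z => f (a * z)) := by
  refine ⟨hf.1.comp (differentiable_id.const_mul a), ?_⟩
  simpa [heCoeff_comp_const_mul hf.1, ha] using hf.2

theorem heNormSq_comp_const_mul {a : ℂ} (ha : ‖a‖ = 1) {f : ℂ → ℂ} (hf : Differentiable ℂ f) :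
    heNormSq ξ (fun z => f (a * z)) = heNormSq ξ f := by
  simp [heNormSq, heCoeff_comp_const_mul hf, ha]

end WeightedNorm

section Rotation

variable {ξ : ℕ → ℝ} {a : ℂ}

theorem isIsometryHE_compOp_const_mul (ha : ‖a‖ = 1) :
    IsIsometryHE ξ (compOp fun z => a * z) :=
  ⟨fun _ hf => memHE_comp_const_mul ha hf, fun _ hf => heNormSq_comp_const_mul ha hf.1⟩

theorem isUnitaryHE_compOp_const_mul (ha : ‖a‖ = 1) :
    IsUnitaryHE ξ (compOp fun z => a * z) := by
  have ha₀ : a ≠ 0 := norm_ne_zero_iff.mp (ha ▸ one_ne_zero)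
  refine ⟨isIsometryHE_compOp_const_mul ha, fun g hg => ⟨fun z => g (a⁻¹ * z), ?_, ?_⟩⟩
  · exact memHE_comp_const_mul (by rw [norm_inv, ha, inv_one]) hg
  · funext z
    simp [compOp, inv_mul_cancel_left₀ ha₀]

end Rotation

theorem compOp_affine_affine (a b c₀ c₁ : ℂ) :
    compOp (fun z => a * z + b) (fun z => c₀ + c₁ * z) = fun z => (c₀ + c₁ * b) + c₁ * a * z := by
  funext z
  simp only [compOp, Function.comp_apply]
  ring

theorem norm_eq_one_and_eq_zero_of_isIsometryHE_compOp_affine {ξ : ℕ → ℝ} (hξ₀ : ξ 0 ≠ 0)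
    (hξ₁ : ξ 1 ≠ 0) {a b : ℂ} (h : IsIsometryHE ξ (compOp fun z => a * z + b)) : ‖a‖ = 1 ∧ b = 0 := by
  have test (c : ℂ) :
      ‖c + b‖ ^ 2 * ξ 0 ^ 2 + ‖a‖ ^ 2 * ξ 1 ^ 2 = ‖c‖ ^ 2 * ξ 0 ^ 2 + ξ 1 ^ 2 := by
    have := h.2 _ (memHE_affine ξ c 1)
    rw [compOp_affine_affine, heNormSq_affine, heNormSq_affine] at this
    simpa using this
  have h₀ := test 0
  rw [zero_add, norm_zero] at h₀
  -- `c = b` against `c = 0` gives `‖2b‖² - ‖b‖² = ‖b‖²`, i.e. `2‖b‖² = 0`.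
  have hb : b = 0 := by
    have h₁ := test b
    rw [← two_mul, norm_mul, Complex.norm_two, mul_pow] at h₁
    have : ‖b‖ ^ 2 * ξ 0 ^ 2 = 0 := by linarith
    simpa [hξ₀] using this
  subst hb
  have ha : ‖a‖ ^ 2 = 1 := by
    have : ‖a‖ ^ 2 * ξ 1 ^ 2 = 1 * ξ 1 ^ 2 := by simpa using h₀
    exact mul_right_cancel₀ (pow_ne_zero 2 hξ₁) this
  exact ⟨(pow_eq_one_iff_of_nonneg (norm_nonneg a) two_ne_zero).mp ha, rfl⟩

theorem stmt6_general (ξ : ℕ → ℝ) (hξ : HEWeight ξ) (a b : ℂ)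
    (Φ : ℂ → ℂ) (hΦ : Φ = fun z => a * z + b) :
    (IsIsometryHE ξ (compOp Φ) ↔ (‖a‖ = 1 ∧ b = 0)) ∧
    (IsUnitaryHE ξ (compOp Φ) ↔ (‖a‖ = 1 ∧ b = 0)) := by
  subst hΦ
  have necessary : IsIsometryHE ξ (compOp fun z => a * z + b) → ‖a‖ = 1 ∧ b = 0 :=
    norm_eq_one_and_eq_zero_of_isIsometryHE_compOp_affine (hξ.1 0).ne' (hξ.1 1).ne'
  refine ⟨⟨necessary, ?_⟩, ⟨fun h => necessary h.1, ?_⟩⟩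
  all_goals
    rintro ⟨ha, rfl⟩
    simp only [add_zero]
  · exact isIsometryHE_compOp_const_mul ha
  · exact isUnitaryHE_compOp_const_mul ha

/-- For bounded `C_Φ`, `Φ(z) = az + b`, `|a| ≤ 1`: `C_Φ` is an isometry
(resp. unitary) on `H_E(ξ)` iff `|a| = 1` and `b = 0`. -/
theorem stmt6 (ξ : ℕ → ℝ) (hξ : HEWeight ξ) (a b : ℂ) (ha : ‖a‖ ≤ 1)
    (Φ : ℂ → ℂ) (hΦ : Φ = fun z => a * z + b)
    (hbd : IsBoundedHE ξ (compOp Φ)) :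
    (IsIsometryHE ξ (compOp Φ) ↔ (‖a‖ = 1 ∧ b = 0)) ∧
    (IsUnitaryHE ξ (compOp Φ) ↔ (‖a‖ = 1 ∧ b = 0)) :=
  stmt6_general ξ hξ a b Φ hΦ
end
end

section
/- Let Υ(z) = az + b and Φ(z) = μz with a, b, μ ∈ ℂ, |μ| ≤ 1, and suppose the weighted composition operator C_{Υ,Φ} f = Υ · (f ∘ Φ) is bounded on H_E(ξ), where ξ_n = √(n!). Then C_{Υ,Φ} is an isometry on H_E(ξ) if and only if |μ| = 1, a = 0, and |b| = 1; and the same equivalence holds for unitarity. -/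
/-! The monomials `zᵏ` are orthogonal with `‖zᵏ‖² = k!`, and `C_{Υ,Φ} zᵏ = aμᵏ z^{k+1} + bμᵏ zᵏ`,
so an isometry must satisfy `|μ|^{2k} (|a|² (k+1) + |b|²) = 1` for every `k`. With `k = 0, 1, 2`
and `x = |a|²`, `t = |μ|²` this forces `t (1 + x) = 1` and `t² (1 + 2x) = 1`, hence `x² = 0`,
and then `t = 1` and `|b| = 1`. Conversely, for `a = 0` the operator multiplies the `n`-th Taylor
coefficient by `bμⁿ`, which is unimodular, and `f ↦ b⁻¹ f(μ⁻¹ ·)` inverts it. -/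

noncomputable section

open Filter

open Polynomial

lemma iteratedDeriv_eval (p : ℂ[X]) (n : ℕ) (x : ℂ) :
    iteratedDeriv n (fun z => p.eval z) x = (derivative^[n] p).eval x := by
  induction n generalizing p with
  | zero => simp
  | succ n ih =>
    rw [iteratedDeriv_succ',
      show deriv (fun z => p.eval z) = fun z => (derivative p).eval z from funext fun z => p.deriv,
      ih, Function.iterate_succ_apply]

lemma heCoeff_eval (p : ℂ[X]) (n : ℕ) : heCoeff (fun z => p.eval z) n = p.coeff n := by
  rw [heCoeff, iteratedDeriv_eval, ← coeff_zero_eq_eval_zero, coeff_iterate_derivative,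
    zero_add, Nat.descFactorial_self, nsmul_eq_mul,
    mul_div_cancel_left₀ _ (Nat.cast_ne_zero.mpr n.factorial_ne_zero)]

section Weighted

variable (ξ : ℕ → ℝ)

lemma memHE_eval (p : ℂ[X]) : MemHE ξ (fun z => p.eval z) := by
  refine ⟨p.differentiable, summable_of_ne_finset_zero (s := p.support) fun n hn => ?_⟩
  simp [heCoeff_eval, notMem_support_iff.mp hn]

lemma heNormSq_eval {p : ℂ[X]} {s : Finset ℕ} (hs : ∀ n ∉ s, p.coeff n = 0) :
    heNormSq ξ (fun z => p.eval z) = ∑ n ∈ s, ‖p.coeff n‖ ^ 2 * ξ n ^ 2 := by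
  rw [heNormSq, tsum_eq_sum (s := s) fun n hn => by simp [heCoeff_eval, hs n hn]]
  simp only [heCoeff_eval]

lemma heNormSq_X_pow (k : ℕ) : heNormSq ξ (fun z => (X ^ k : ℂ[X]).eval z) = ξ k ^ 2 := by
  rw [heNormSq_eval ξ (s := {k}) fun n hn => by simp_all [coeff_X_pow]]
  simp

lemma wCompOp_affine_X_pow (a b μ : ℂ) (k : ℕ) :
    wCompOp (fun z => a * z + b) (fun z => μ * z) (fun z => (X ^ k : ℂ[X]).eval z) =
      fun z => (C (a * μ ^ k) * X ^ (k + 1) + C (b * μ ^ k) * X ^ k).eval z := by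
  funext z
  simp only [wCompOp, eval_add, eval_mul, eval_C, eval_pow, eval_X]
  ring

lemma heNormSq_wCompOp_affine_X_pow (a b μ : ℂ) (k : ℕ) :
    heNormSq ξ (wCompOp (fun z => a * z + b) (fun z => μ * z) (fun z => (X ^ k : ℂ[X]).eval z)) =
      ‖μ‖ ^ (2 * k) * (‖a‖ ^ 2 * ξ (k + 1) ^ 2 + ‖b‖ ^ 2 * ξ k ^ 2) := by
  rw [wCompOp_affine_X_pow, heNormSq_eval ξ (s := {k + 1, k}) fun n hn => ?_,
    Finset.sum_pair (Nat.succ_ne_self k)]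
  · simp only [coeff_add, coeff_C_mul, coeff_X_pow]
    simp [norm_pow]
    ring
  · simp only [Finset.mem_insert, Finset.mem_singleton, not_or] at hn
    simp only [coeff_add, coeff_C_mul, coeff_X_pow, if_neg hn.1, if_neg hn.2, mul_zero, add_zero]

lemma heCoeff_const_mul_comp_mul (c m : ℂ) {f : ℂ → ℂ} (hf : Differentiable ℂ f) (n : ℕ) :
    heCoeff (fun z => c * f (m * z)) n = c * m ^ n * heCoeff f n := by
  simp only [heCoeff, iteratedDeriv_const_mul_field, iteratedDeriv_comp_const_mul hf.contDiff,
    mul_zero]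
  ring

lemma norm_heCoeff_const_mul_comp_mul {c m : ℂ} (hc : ‖c‖ = 1) (hm : ‖m‖ = 1) {f : ℂ → ℂ}
    (hf : Differentiable ℂ f) (n : ℕ) :
    ‖heCoeff (fun z => c * f (m * z)) n‖ = ‖heCoeff f n‖ := by
  simp [heCoeff_const_mul_comp_mul c m hf, hc, hm]

lemma memHE_const_mul_comp_mul {c m : ℂ} (hc : ‖c‖ = 1) (hm : ‖m‖ = 1) {f : ℂ → ℂ}
    (hf : MemHE ξ f) : MemHE ξ (fun z => c * f (m * z)) :=
  ⟨(hf.1.comp (differentiable_id.const_mul m)).const_mul c,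
    hf.2.congr fun n => by rw [norm_heCoeff_const_mul_comp_mul hc hm hf.1]⟩

lemma heNormSq_const_mul_comp_mul {c m : ℂ} (hc : ‖c‖ = 1) (hm : ‖m‖ = 1) {f : ℂ → ℂ}
    (hf : Differentiable ℂ f) : heNormSq ξ (fun z => c * f (m * z)) = heNormSq ξ f :=
  tsum_congr fun n => by rw [norm_heCoeff_const_mul_comp_mul hc hm hf]

lemma isUnitaryHE_wCompOp_const_mul {b μ : ℂ} (hb : ‖b‖ = 1) (hμ : ‖μ‖ = 1) :
    IsUnitaryHE ξ (wCompOp (fun _ => b) (fun z => μ * z)) := by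
  have hb0 : b ≠ 0 := norm_ne_zero_iff.mp (by simp [hb])
  have hμ0 : μ ≠ 0 := norm_ne_zero_iff.mp (by simp [hμ])
  refine ⟨⟨fun f => memHE_const_mul_comp_mul ξ hb hμ,
    fun f hf => heNormSq_const_mul_comp_mul ξ hb hμ hf.1⟩, fun g hg => ?_⟩
  refine ⟨fun z => b⁻¹ * g (μ⁻¹ * z),
    memHE_const_mul_comp_mul ξ (by simp [hb]) (by simp [hμ]) hg, ?_⟩
  funext z
  simp [wCompOp, hb0, hμ0]

end Weighted

lemma eq_zero_and_eq_one_of_moment_eqs {x y t : ℝ} (hx : 0 ≤ x) (h₀ : x + y = 1)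
    (h₁ : t * (2 * x + y) = 1) (h₂ : t ^ 2 * (6 * x + 2 * y) = 2) :
    x = 0 ∧ t = 1 ∧ y = 1 := by
  obtain rfl : y = 1 - x := by linarith
  have htx : (t * x) ^ 2 = 0 := by linear_combination (t * (1 + x) + 1) * h₁ - h₂ / 2
  have ht : t ≠ 0 := by rintro rfl; simp at h₁
  obtain rfl : x = 0 := (mul_eq_zero.mp (pow_eq_zero_iff two_ne_zero |>.mp htx)).resolve_left ht
  exact ⟨rfl, by linarith, by ring⟩

lemma affine_params_of_isIsometryHE_fock {a b μ : ℂ}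
    (hiso : IsIsometryHE (fun n => Real.sqrt n.factorial)
      (wCompOp (fun z => a * z + b) (fun z => μ * z))) :
    ‖μ‖ = 1 ∧ a = 0 ∧ ‖b‖ = 1 := by
  have hmoment : ∀ k, ‖μ‖ ^ (2 * k) * (‖a‖ ^ 2 * (k + 1).factorial + ‖b‖ ^ 2 * k.factorial) =
      k.factorial := fun k => by
    have h := hiso.2 _ (memHE_eval _ (X ^ k))
    rwa [heNormSq_wCompOp_affine_X_pow, heNormSq_X_pow, Real.sq_sqrt (by positivity),
      Real.sq_sqrt (by positivity)] at h
  have h₀ := hmoment 0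
  have h₁ := hmoment 1
  have h₂ := hmoment 2
  norm_num [Nat.factorial] at h₀ h₁ h₂
  obtain ⟨ha, hμ, hb⟩ := eq_zero_and_eq_one_of_moment_eqs (sq_nonneg ‖a‖) h₀ (t := ‖μ‖ ^ 2)
    (by linear_combination h₁) (by linear_combination h₂)
  exact ⟨by nlinarith [norm_nonneg μ], norm_eq_zero.mp (pow_eq_zero_iff two_ne_zero |>.mp ha),
    by nlinarith [norm_nonneg b]⟩

theorem stmt11_general (ξ : ℕ → ℝ) (hξ : ξ = fun n => Real.sqrt (n.factorial))
    (a b μ : ℂ)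
    (Υ Φ : ℂ → ℂ) (hΥ : Υ = fun z => a * z + b) (hΦ : Φ = fun z => μ * z) :
    (IsIsometryHE ξ (wCompOp Υ Φ) ↔ (‖μ‖ = 1 ∧ a = 0 ∧ ‖b‖ = 1)) ∧
    (IsUnitaryHE ξ (wCompOp Υ Φ) ↔ (‖μ‖ = 1 ∧ a = 0 ∧ ‖b‖ = 1)) := by
  subst hξ hΥ hΦ
  have hunitary : ‖μ‖ = 1 ∧ a = 0 ∧ ‖b‖ = 1 →
      IsUnitaryHE (fun n => Real.sqrt n.factorial)
        (wCompOp (fun z => a * z + b) (fun z => μ * z)) := by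
    rintro ⟨hμ, rfl, hb⟩
    simpa only [zero_mul, zero_add] using isUnitaryHE_wCompOp_const_mul _ hb hμ
  exact ⟨⟨affine_params_of_isIsometryHE_fock, fun h => (hunitary h).1⟩,
    ⟨fun h => affine_params_of_isIsometryHE_fock h.1, hunitary⟩⟩

/-- On the Fock space (`ξ_n = √(n!)`), the bounded weighted composition operator
`C_{Υ,Φ}`, `Υ(z) = az + b`, `Φ(z) = μz`, `|μ| ≤ 1`, is an isometry (resp.
unitary) iff `|μ| = 1`, `a = 0` and `|b| = 1`. -/
theorem stmt11 (ξ : ℕ → ℝ) (hξ : ξ = fun n => Real.sqrt (n.factorial))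
    (a b μ : ℂ) (hμ : ‖μ‖ ≤ 1)
    (Υ Φ : ℂ → ℂ) (hΥ : Υ = fun z => a * z + b) (hΦ : Φ = fun z => μ * z)
    (hbd : IsBoundedHE ξ (wCompOp Υ Φ)) :
    (IsIsometryHE ξ (wCompOp Υ Φ) ↔ (‖μ‖ = 1 ∧ a = 0 ∧ ‖b‖ = 1)) ∧
    (IsUnitaryHE ξ (wCompOp Υ Φ) ↔ (‖μ‖ = 1 ∧ a = 0 ∧ ‖b‖ = 1)) :=
  stmt11_general ξ hξ a b μ Υ Φ hΥ hΦ
end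
end

section
/- Let Φ be an entire function such that {Φ^n}_{n≥0} is orthogonal in H_E(ξ), and p ≥ 1 an integer. The operator C_Φ D^p (f ↦ f^{(p)} ∘ Φ) is bounded on H_E(ξ) if and only if there exists M > 0 with ‖Φ^{n−p}‖ ≤ M ξ_n / (n(n−1)⋯(n−p+1)) for all n ≥ p. -/
/-!
The map `f ↦ (aₙ ξₙ)ₙ`, where `aₙ` are the Taylor coefficients of `f`, identifies `H_E(ξ)`
isometrically with `ℓ²`, and evaluation at `z` is the inner product with `(z̄ⁿ / ξₙ)ₙ`, which is
square-summable because `ξₙ ^ (1/n) → ∞`. For `f = ∑ aₙ zⁿ`,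
`f⁽ᵖ⁾ ∘ Φ = ∑ₖ a_{k+p} (k+p)⋯(k+1) Φᵏ` is an orthogonal series, so
`‖f⁽ᵖ⁾ ∘ Φ‖² = ∑ₖ |a_{k+p}|² ((k+p)⋯(k+1))² ‖Φᵏ‖²`, which the bound on `‖Φᵏ‖` makes at most
`M² ‖f‖²`. Conversely, `zⁿ` has norm `ξₙ` and is sent to `n⋯(n-p+1) Φⁿ⁻ᵖ`.
-/

noncomputable section

open Filter

open scoped InnerProductSpace lp

section Coefficients

theorem hasSum_heCoeff_mul_pow {f : ℂ → ℂ} (hf : Differentiable ℂ f) (z : ℂ) :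
    HasSum (fun n => heCoeff f n * z ^ n) (f z) := by
  refine (Complex.hasSum_taylorSeries_of_entire hf 0 z).congr_fun fun n => ?_
  rw [heCoeff, sub_zero, smul_eq_mul, smul_eq_mul]
  ring

theorem heCoeff_const_mul (c : ℂ) (f : ℂ → ℂ) (n : ℕ) :
    heCoeff (fun z => c * f z) n = c * heCoeff f n := by
  simp [heCoeff, mul_div_assoc]

theorem heCoeff_pow (m n : ℕ) : heCoeff (fun z => z ^ m) n = if n = m then 1 else 0 := by
  rw [heCoeff, iteratedDeriv_fun_pow_zero]
  split_ifs with h <;> simp [h, Nat.factorial_ne_zero]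

theorem heCoeff_iteratedDeriv (f : ℂ → ℂ) (q k : ℕ) :
    heCoeff (iteratedDeriv q f) k = heCoeff f (k + q) * (k + q).descFactorial q := by
  have hfac : (k.factorial : ℂ) * (k + q).descFactorial q = (k + q).factorial := by
    exact_mod_cast (Nat.add_sub_cancel k q ▸ Nat.factorial_mul_descFactorial (Nat.le_add_left q k))
  simp only [heCoeff, iteratedDeriv_eq_iterate, ← Function.iterate_add_apply, ← hfac]
  field_simp

end Coefficients

section WeightedHardySpace

variable {ξ : ℕ → ℝ}

theorem heNormSq_nonneg (ξ : ℕ → ℝ) (f : ℂ → ℂ) : 0 ≤ heNormSq ξ f :=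
  tsum_nonneg fun _ => by positivity

theorem heNormSq_const_mul (c : ℂ) (f : ℂ → ℂ) :
    heNormSq ξ (fun z => c * f z) = ‖c‖ ^ 2 * heNormSq ξ f := by
  rw [heNormSq, heNormSq, ← tsum_mul_left]
  congr with n
  rw [heCoeff_const_mul, norm_mul]
  ring

theorem heInner_const_mul (c d : ℂ) (f g : ℂ → ℂ) :
    heInner ξ (fun z => c * f z) (fun z => d * g z) =
      c * starRingEnd ℂ d * heInner ξ f g := by
  rw [heInner, heInner, ← tsum_mul_left]
  congr with n
  rw [heCoeff_const_mul, heCoeff_const_mul, map_mul]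
  ring

theorem MemHE.const_mul {f : ℂ → ℂ} (hf : MemHE ξ f) (c : ℂ) :
    MemHE ξ (fun z => c * f z) := by
  refine ⟨hf.1.const_mul c, ?_⟩
  simpa only [heCoeff_const_mul, norm_mul, mul_pow, mul_assoc] using hf.2.mul_left (‖c‖ ^ 2)

theorem MemHE.of_const_mul {c : ℂ} (hc : c ≠ 0) {f : ℂ → ℂ}
    (hf : MemHE ξ (fun z => c * f z)) : MemHE ξ f := by
  simpa only [inv_mul_cancel_left₀ hc] using hf.const_mul c⁻¹

theorem memHE_pow (m : ℕ) : MemHE ξ (fun z => z ^ m) := by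
  refine ⟨differentiable_pow m, summable_of_ne_finset_zero (s := {m}) fun n hn => ?_⟩
  simp [heCoeff_pow, Finset.notMem_singleton.1 hn]

theorem heNormSq_pow (m : ℕ) : heNormSq ξ (fun z => z ^ m) = ξ m ^ 2 := by
  rw [heNormSq, tsum_eq_single m fun n hn => by simp [heCoeff_pow, hn]]
  simp [heCoeff_pow]

end WeightedHardySpace

theorem HEWeight.summable_pow_div_sq {ξ : ℕ → ℝ} (hξ : HEWeight ξ) {r : ℝ} (hr : 0 ≤ r) :
    Summable fun n => r ^ n / ξ n ^ 2 := by
  set b := Real.sqrt (r + 1)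
  have hb : b ^ 2 = r + 1 := Real.sq_sqrt (by linarith)
  have hpow : ∀ᶠ n in atTop, b ^ n ≤ ξ n := by
    filter_upwards [hξ.2.eventually_ge_atTop b, eventually_ne_atTop 0] with n hn hn0
    calc b ^ n ≤ (ξ n ^ ((n : ℝ)⁻¹)) ^ n := by
          rw [one_div] at hn
          exact pow_le_pow_left₀ (Real.sqrt_nonneg _) hn n
      _ = ξ n := Real.rpow_inv_natCast_pow (hξ.1 n).le hn0
  refine Summable.of_norm_bounded_eventually_nat
    (summable_geometric_of_lt_one (by positivity) ((div_lt_one (by linarith)).2 (lt_add_one r)))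
    (hpow.mono fun n hn => ?_)
  rw [Real.norm_of_nonneg (by positivity), div_pow, ← hb, ← pow_mul, mul_comm 2 n, pow_mul]
  exact div_le_div_of_nonneg_left (by positivity) (by positivity)
    (pow_le_pow_left₀ (by positivity) hn 2)

theorem HEWeight.exists_differentiable_heCoeff_eq {ξ : ℕ → ℝ} (hξ : HEWeight ξ) {c : ℕ → ℂ}
    (hc : Summable fun n => ‖c n‖ ^ 2 * ξ n ^ 2) :
    ∃ h : ℂ → ℂ, Differentiable ℂ h ∧ heCoeff h = c := by
  set P := FormalMultilinearSeries.ofScalars ℂ c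
  have hrad : P.radius = ⊤ := by
    refine P.radius_eq_top_of_summable_norm fun r => ?_
    refine .of_nonneg_of_le (fun n => by positivity) (fun n => ?_)
      ((hc.add (hξ.summable_pow_div_sq (sq_nonneg (r : ℝ)))).div_const 2)
    calc ‖P n‖ * (r : ℝ) ^ n = (‖c n‖ * ξ n) * ((r : ℝ) ^ n / ξ n) := by
          rw [FormalMultilinearSeries.ofScalars_norm]; field_simp [(hξ.1 n).ne']
      _ ≤ ((‖c n‖ * ξ n) ^ 2 + ((r : ℝ) ^ n / ξ n) ^ 2) / 2 := by
          linarith [two_mul_le_add_sq (‖c n‖ * ξ n) ((r : ℝ) ^ n / ξ n)]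
      _ = _ := by ring
  have hball : HasFPowerSeriesOnBall P.sum P 0 ⊤ := hrad ▸ P.hasFPowerSeriesOnBall (by simp [hrad])
  refine ⟨P.sum, fun z => (hball.analyticAt_of_mem (by simp)).differentiableAt, funext fun n => ?_⟩
  have := hball.factorial_smul 1 n
  rw [heCoeff, iteratedDeriv_eq_iteratedFDeriv, ← this]
  simp [P, Nat.factorial_ne_zero]

section L2

variable {ι : Type*} {E : ι → Type*} [∀ i, NormedAddCommGroup (E i)]

theorem memℓp_two_iff {f : ∀ i, E i} : Memℓp f 2 ↔ Summable fun i => ‖f i‖ ^ 2 := by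
  simp [memℓp_gen_iff (p := 2) (by norm_num)]

theorem lp.norm_sq_eq_tsum (f : lp E 2) : ‖f‖ ^ 2 = ∑' i, ‖f i‖ ^ 2 := by
  simpa [Real.rpow_two] using lp.norm_rpow_eq_tsum (p := 2) (by norm_num) f

end L2

theorem exists_hasSum_norm_sq_of_pairwise_inner_eq_zero {𝕜 F ι : Type*} [RCLike 𝕜]
    [NormedAddCommGroup F] [InnerProductSpace 𝕜 F] [CompleteSpace F] {u : ι → F}
    (horth : Pairwise fun i j => ⟪u i, u j⟫_𝕜 = 0) (hu : Summable fun i => ‖u i‖ ^ 2) :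
    ∃ S, HasSum u S ∧ ‖S‖ ^ 2 = ∑' i, ‖u i‖ ^ 2 := by
  have hV : OrthogonalFamily 𝕜 (fun i => 𝕜 ∙ u i) fun i => (𝕜 ∙ u i).subtypeₗᵢ :=
    orthogonalFamily_iff_pairwise.2 fun i j hij =>
      Submodule.isOrtho_span.2 (by rintro _ rfl _ rfl; exact horth hij)
  let f : lp (fun i => 𝕜 ∙ u i) 2 :=
    ⟨fun i => ⟨u i, Submodule.mem_span_singleton_self _⟩, memℓp_two_iff.2 hu⟩
  exact ⟨hV.linearIsometry f, hV.hasSum_linearIsometry f, by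
    rw [LinearIsometry.norm_map, lp.norm_sq_eq_tsum]; rfl⟩

section CoefficientEmbedding

variable {ξ : ℕ → ℝ}

def heSeq (ξ : ℕ → ℝ) (f : ℂ → ℂ) (n : ℕ) : ℂ := heCoeff f n * ξ n

theorem norm_heSeq_sq (f : ℂ → ℂ) (n : ℕ) :
    ‖heSeq ξ f n‖ ^ 2 = ‖heCoeff f n‖ ^ 2 * ξ n ^ 2 := by
  rw [heSeq, norm_mul, Complex.norm_real, Real.norm_eq_abs, mul_pow, sq_abs]

theorem MemHE.memℓp {f : ℂ → ℂ} (hf : MemHE ξ f) : Memℓp (heSeq ξ f) 2 :=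
  memℓp_two_iff.2 (by simpa only [norm_heSeq_sq] using hf.2)

def MemHE.toLp {f : ℂ → ℂ} (hf : MemHE ξ f) : ℓ²(ℕ, ℂ) := ⟨heSeq ξ f, hf.memℓp⟩

theorem MemHE.norm_toLp_sq {f : ℂ → ℂ} (hf : MemHE ξ f) : ‖hf.toLp‖ ^ 2 = heNormSq ξ f := by
  simp only [lp.norm_sq_eq_tsum, MemHE.toLp, norm_heSeq_sq, heNormSq]

theorem MemHE.inner_toLp {f g : ℂ → ℂ} (hf : MemHE ξ f) (hg : MemHE ξ g) :
    ⟪hf.toLp, hg.toLp⟫_ℂ = heInner ξ g f := by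
  rw [lp.inner_eq_tsum, heInner]
  congr with n
  simp only [MemHE.toLp, heSeq, RCLike.inner_apply, map_mul, Complex.conj_ofReal]
  ring

def HEWeight.kernelLp (hξ : HEWeight ξ) (z : ℂ) : ℓ²(ℕ, ℂ) :=
  ⟨fun n => starRingEnd ℂ z ^ n / ξ n, memℓp_two_iff.2 <| by
    simpa [div_pow, ← pow_mul, mul_comm 2] using hξ.summable_pow_div_sq (sq_nonneg ‖z‖)⟩

theorem MemHE.inner_kernelLp_toLp (hξ : HEWeight ξ) {f : ℂ → ℂ} (hf : MemHE ξ f) (z : ℂ) :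
    ⟪hξ.kernelLp z, hf.toLp⟫_ℂ = f z := by
  rw [lp.inner_eq_tsum, ← (hasSum_heCoeff_mul_pow hf.1 z).tsum_eq]
  congr with n
  have : (ξ n : ℂ) ≠ 0 := Complex.ofReal_ne_zero.2 (hξ.1 n).ne'
  simp only [HEWeight.kernelLp, MemHE.toLp, heSeq, RCLike.inner_apply, map_div₀, map_pow,
    Complex.conj_conj, Complex.conj_ofReal]
  field_simp

theorem HEWeight.exists_toLp_eq (hξ : HEWeight ξ) (S : ℓ²(ℕ, ℂ)) :
    ∃ (h : ℂ → ℂ) (hh : MemHE ξ h), hh.toLp = S := by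
  have hS : Summable fun n => ‖S n / ξ n‖ ^ 2 * ξ n ^ 2 := by
    refine (memℓp_two_iff.1 S.2).congr fun n => ?_
    rw [norm_div, Complex.norm_real, Real.norm_eq_abs, div_pow, sq_abs,
      div_mul_cancel₀ _ (pow_ne_zero 2 (hξ.1 n).ne')]
  obtain ⟨h, hd, hc⟩ := hξ.exists_differentiable_heCoeff_eq hS
  have hh : MemHE ξ h := ⟨hd, hc ▸ hS⟩
  refine ⟨h, hh, lp.ext (funext fun n => ?_)⟩
  simp [MemHE.toLp, heSeq, hc, (hξ.1 n).ne']

end CoefficientEmbedding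

theorem HEWeight.exists_memHE_hasSum_of_pairwise_heInner_eq_zero {ξ : ℕ → ℝ} (hξ : HEWeight ξ)
    {g : ℕ → ℂ → ℂ} (hg : ∀ k, MemHE ξ (g k))
    (horth : Pairwise fun i j => heInner ξ (g i) (g j) = 0)
    (hsum : Summable fun k => heNormSq ξ (g k)) :
    ∃ h, MemHE ξ h ∧ (∀ z, HasSum (fun k => g k z) (h z)) ∧
      heNormSq ξ h = ∑' k, heNormSq ξ (g k) := by
  obtain ⟨S, hS, hnorm⟩ := exists_hasSum_norm_sq_of_pairwise_inner_eq_zero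
    (𝕜 := ℂ) (u := fun k => (hg k).toLp)
    (fun i j hij => (MemHE.inner_toLp _ _).trans (horth hij.symm))
    (by simpa only [MemHE.norm_toLp_sq] using hsum)
  obtain ⟨h, hh, rfl⟩ := hξ.exists_toLp_eq S
  refine ⟨h, hh, fun z => ?_, by simpa only [MemHE.norm_toLp_sq] using hnorm⟩
  simpa only [innerSL_apply_apply, MemHE.inner_kernelLp_toLp] using
    (innerSL ℂ (hξ.kernelLp z)).hasSum hS

section DifferentiationComposition

variable (p : ℕ) (Φ : ℂ → ℂ)

theorem genWComp_one_pow (n : ℕ) :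
    genWComp p Φ (fun _ => 1) (fun z => z ^ n) =
      fun z => (n.descFactorial p : ℂ) * Φ z ^ (n - p) := by
  funext z
  simp [genWComp]

theorem hasSum_genWComp_one {f : ℂ → ℂ} (hf : Differentiable ℂ f) (z : ℂ) :
    HasSum (fun k => heCoeff f (k + p) * (k + p).descFactorial p * Φ z ^ k)
      (genWComp p Φ (fun _ => 1) f z) := by
  have hDf : Differentiable ℂ (iteratedDeriv p f) :=
    (hf.contDiff (n := p + 1)).differentiable_iteratedDeriv' p
  simpa only [genWComp, one_mul, heCoeff_iteratedDeriv] using hasSum_heCoeff_mul_pow hDf (Φ z)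

end DifferentiationComposition

theorem heNormSq_mul_natCast_mul_le {ξ : ℕ → ℝ} {q : ℂ → ℂ} (c : ℂ) {d : ℕ} (hd : 0 < d)
    {B : ℝ} (hq : Real.sqrt (heNormSq ξ q) ≤ B / d) :
    heNormSq ξ (fun z => c * d * q z) ≤ (‖c‖ * B) ^ 2 := by
  have hd' : (0 : ℝ) < d := Nat.cast_pos.2 hd
  have hsq : heNormSq ξ q * d ^ 2 ≤ B ^ 2 := by
    calc heNormSq ξ q * d ^ 2 = (Real.sqrt (heNormSq ξ q) * d) ^ 2 := by
          rw [mul_pow, Real.sq_sqrt (heNormSq_nonneg ξ q)]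
      _ ≤ B ^ 2 := pow_le_pow_left₀ (by positivity) ((le_div_iff₀ hd').1 hq) 2
  simp_rw [mul_assoc c]
  rw [heNormSq_const_mul, heNormSq_const_mul, Complex.norm_natCast, mul_pow]
  nlinarith [sq_nonneg ‖c‖]

section Boundedness

variable {ξ : ℕ → ℝ} {p : ℕ} {Φ : ℂ → ℂ} {M : ℝ}

theorem memHE_comp_pow_and_sqrt_heNormSq_le {n : ℕ} (hn : p ≤ n) (hξn : 0 ≤ ξ n)
    (hT : ∀ f, MemHE ξ f → MemHE ξ (genWComp p Φ (fun _ => 1) f) ∧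
      Real.sqrt (heNormSq ξ (genWComp p Φ (fun _ => 1) f)) ≤ M * Real.sqrt (heNormSq ξ f)) :
    MemHE ξ (fun z => Φ z ^ (n - p)) ∧
      Real.sqrt (heNormSq ξ (fun z => Φ z ^ (n - p))) ≤ M * ξ n / (n.descFactorial p : ℝ) := by
  have hd₀ : 0 < n.descFactorial p := Nat.descFactorial_pos.2 hn
  have hd : (0 : ℝ) < n.descFactorial p := Nat.cast_pos.2 hd₀
  obtain ⟨hmem, hle⟩ := hT _ (memHE_pow n)
  rw [genWComp_one_pow] at hmem hle
  refine ⟨hmem.of_const_mul (Nat.cast_ne_zero.2 hd₀.ne'), ?_⟩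
  rw [heNormSq_const_mul, heNormSq_pow, Real.sqrt_mul (by positivity), Complex.norm_natCast,
    Real.sqrt_sq hd.le, Real.sqrt_sq hξn] at hle
  rw [le_div_iff₀ hd, mul_comm]
  exact hle

theorem isBoundedHE_genWComp_one (hξ : HEWeight ξ)
    (horth : ∀ m n : ℕ, m ≠ n → heInner ξ (fun z => Φ z ^ m) (fun z => Φ z ^ n) = 0)
    (hM : 0 < M) (hbound : ∀ n, p ≤ n → MemHE ξ (fun z => Φ z ^ (n - p)) ∧
      Real.sqrt (heNormSq ξ (fun z => Φ z ^ (n - p))) ≤ M * ξ n / (n.descFactorial p : ℝ)) :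
    IsBoundedHE ξ (genWComp p Φ (fun _ => 1)) := by
  refine ⟨M, hM, fun f hf => ?_⟩
  set a : ℕ → ℝ := fun k => ‖heCoeff f (k + p)‖ ^ 2 * ξ (k + p) ^ 2
  set g : ℕ → ℂ → ℂ := fun k z => heCoeff f (k + p) * (k + p).descFactorial p * Φ z ^ k
  have hg : ∀ k, MemHE ξ (g k) ∧ heNormSq ξ (g k) ≤ M ^ 2 * a k := by
    intro k
    obtain ⟨hmem, hle⟩ := hbound (k + p) le_add_self
    rw [Nat.add_sub_cancel] at hmem hle
    refine ⟨hmem.const_mul _, ?_⟩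
    calc heNormSq ξ (g k) ≤ (‖heCoeff f (k + p)‖ * (M * ξ (k + p))) ^ 2 :=
          heNormSq_mul_natCast_mul_le _ (Nat.descFactorial_pos.2 le_add_self) hle
      _ = M ^ 2 * a k := by ring
  have ha : Summable a := hf.2.comp_injective (add_left_injective p)
  have hsum : Summable fun k => heNormSq ξ (g k) :=
    .of_nonneg_of_le (fun k => heNormSq_nonneg _ _) (fun k => (hg k).2) (ha.mul_left _)
  have horth' : Pairwise fun i j => heInner ξ (g i) (g j) = 0 := fun i j hij => by
    simp only [g, heInner_const_mul, horth i j hij, mul_zero]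
  obtain ⟨h, hh, hpt, hnorm⟩ :=
    hξ.exists_memHE_hasSum_of_pairwise_heInner_eq_zero (fun k => (hg k).1) horth' hsum
  have hTf : genWComp p Φ (fun _ => 1) f = h :=
    funext fun z => (hasSum_genWComp_one p Φ hf.1 z).unique (hpt z)
  have hle : heNormSq ξ h ≤ M ^ 2 * heNormSq ξ f := calc
    heNormSq ξ h = ∑' k, heNormSq ξ (g k) := hnorm
    _ ≤ ∑' k, M ^ 2 * a k := hsum.tsum_le_tsum (fun k => (hg k).2) (ha.mul_left _)
    _ ≤ M ^ 2 * heNormSq ξ f := by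
      rw [heNormSq, ← tsum_mul_left]
      exact (ha.mul_left _).tsum_le_tsum_of_inj (· + p) (add_left_injective p)
        (fun _ _ => by positivity) (fun _ => le_rfl) (hf.2.mul_left _)
  refine hTf ▸ ⟨hh, ?_⟩
  calc Real.sqrt (heNormSq ξ h) ≤ Real.sqrt (M ^ 2 * heNormSq ξ f) := Real.sqrt_le_sqrt hle
    _ = M * Real.sqrt (heNormSq ξ f) := by
      rw [Real.sqrt_mul' _ (heNormSq_nonneg _ _), Real.sqrt_sq hM.le]

end Boundedness

theorem stmt19_general (ξ : ℕ → ℝ) (hξ : HEWeight ξ) (Φ : ℂ → ℂ)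
    (p : ℕ)
    (horth : ∀ m n : ℕ, m ≠ n →
      heInner ξ (fun z => Φ z ^ m) (fun z => Φ z ^ n) = 0) :
    IsBoundedHE ξ (genWComp p Φ (fun _ => 1)) ↔
    ∃ M > (0 : ℝ), ∀ n, p ≤ n →
      MemHE ξ (fun z => Φ z ^ (n - p)) ∧
      Real.sqrt (heNormSq ξ (fun z => Φ z ^ (n - p))) ≤
        M * ξ n / (n.descFactorial p : ℝ) := by
  constructor
  · rintro ⟨M, hM, hT⟩
    exact ⟨M, hM, fun n hn => memHE_comp_pow_and_sqrt_heNormSq_le hn (hξ.1 n).le hT⟩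
  · rintro ⟨M, hM, hbound⟩
    exact isBoundedHE_genWComp_one hξ horth hM hbound

/-- Boundedness of `C_Φ D^p (f ↦ f^{(p)} ∘ Φ)` on `H_E(ξ)`, when `{Φ^n}` is
orthogonal, is equivalent to `‖Φ^{n-p}‖ ≤ M ξ_n / (n(n-1)⋯(n-p+1))` for all
`n ≥ p`. -/
theorem stmt19 (ξ : ℕ → ℝ) (hξ : HEWeight ξ) (Φ : ℂ → ℂ)
    (hΦ : Differentiable ℂ Φ) (p : ℕ) (hp : 1 ≤ p)
    (horth : ∀ m n : ℕ, m ≠ n →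
      heInner ξ (fun z => Φ z ^ m) (fun z => Φ z ^ n) = 0) :
    IsBoundedHE ξ (genWComp p Φ (fun _ => 1)) ↔
    ∃ M > (0 : ℝ), ∀ n, p ≤ n →
      MemHE ξ (fun z => Φ z ^ (n - p)) ∧
      Real.sqrt (heNormSq ξ (fun z => Φ z ^ (n - p))) ≤
        M * ξ n / (n.descFactorial p : ℝ) :=
  stmt19_general ξ hξ Φ p horth
end
end
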